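/- Let Λ ∈ Sym(2n,ℝ) be written in 2×2 block form with n×n blocks Λ¹¹, Λ¹², Λ²¹ = (Λ¹²)ᵀ, Λ²², let M ∈ Sym(n,ℝ) be invertible, and suppose Λ²² + M is negative definite. Define Π(Λ) as the symmetric 2n×2n matrix with blocks Π¹¹ = Λ¹¹ − Λ¹²(M+Λ²²)⁻¹(Λ¹²)ᵀ, Π¹² = Λ¹²(M+Λ²²)⁻¹M, Π²¹ = (Π¹²)ᵀ, Π²² = M − M(M+Λ²²)⁻¹M. Then Π(Λ)²² − M is positive definite, and the map Π⁻¹ defined on symmetric Q with Q²² − M positive definite by (Π⁻¹)¹¹ = Q¹¹ + Q¹²(M−Q²²)⁻¹(Q¹²)ᵀ, (Π⁻¹)¹² = Q¹²(M−Q²²)⁻¹M, (Π⁻¹)²² = M(M−Q²²)⁻¹M − M satisfies Π⁻¹(Π(Λ)) = Λ. -/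

import Mathlib

/-!
With `A = M + Λ²²`, the defect `M - Π(Λ)²² = M A⁻¹ M` is a congruence of `A⁻¹`. Hence
`Π(Λ)²² - M = -(M A⁻¹ M)` is positive definite because `-A` is, and `M (M - Π(Λ)²²)⁻¹ M = A`;
every block of `Π⁻¹(Π(Λ))` collapses to the corresponding block of `Λ` through this identity.
-/

open Matrix

namespace Matrix

section CommRing

variable {m R : Type*} [Fintype m] [DecidableEq m] [CommRing R]

lemma inv_neg (A : Matrix m m R) : (-A)⁻¹ = -A⁻¹ := by
  by_cases hA : IsUnit A
  · exact inv_eq_right_inv (by rw [neg_mul_neg, mul_nonsing_inv A ((isUnit_iff_isUnit_det A).mp hA)])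
  · have hA' : ¬IsUnit (-A) := by rwa [IsUnit.neg_iff]
    rw [isUnit_iff_isUnit_det] at hA hA'
    rw [nonsing_inv_apply_not_isUnit _ hA, nonsing_inv_apply_not_isUnit _ hA', neg_zero]

lemma mul_inv_mul_nonsing_inv_mul {A M : Matrix m m R} (hA : IsUnit A) (hM : IsUnit M) :
    M * (M * A⁻¹ * M)⁻¹ * M = A := by
  rw [isUnit_iff_isUnit_det] at hA hM
  rw [mul_inv_rev, mul_inv_rev, nonsing_inv_nonsing_inv A hA,
    mul_nonsing_inv_cancel_left _ _ hM, nonsing_inv_mul_cancel_right _ _ hM]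

end CommRing

lemma posDef_neg_conjTranspose_mul_inv_mul {m K : Type*} [Fintype m] [DecidableEq m] [Field K]
    [PartialOrder K] [StarRing K] {A M : Matrix m m K} (hA : (-A).PosDef) (hM : IsUnit M) :
    (-(Mᴴ * A⁻¹ * M)).PosDef := by
  have h : -(Mᴴ * A⁻¹ * M) = Mᴴ * (-A)⁻¹ * M := by
    rw [inv_neg, Matrix.mul_neg, Matrix.neg_mul]
  rw [h]
  exact hA.inv.conjTranspose_mul_mul_same (mulVec_injective_of_isUnit hM)

end Matrix

theorem Pi_map_and_inverse_general {n : ℕ}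
    (M Λ11 Λ12 Λ22 : Matrix (Fin n) (Fin n) ℝ)
    (hM : Mᵀ = M) (hMinv : IsUnit M)
    (hΛ22 : Λ22ᵀ = Λ22)
    (hneg : (-(M + Λ22)).PosDef) :
    ((M - M * (M + Λ22)⁻¹ * M) - M).PosDef ∧
    (Λ11 - Λ12 * (M + Λ22)⁻¹ * Λ12ᵀ)
        + (Λ12 * (M + Λ22)⁻¹ * M) * (M - (M - M * (M + Λ22)⁻¹ * M))⁻¹ * (Λ12 * (M + Λ22)⁻¹ * M)ᵀ
      = Λ11 ∧
    (Λ12 * (M + Λ22)⁻¹ * M) * (M - (M - M * (M + Λ22)⁻¹ * M))⁻¹ * M = Λ12 ∧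
    M * (M - (M - M * (M + Λ22)⁻¹ * M))⁻¹ * M - M = Λ22 := by
  set A := M + Λ22 with hA
  have hAunit : IsUnit A := by simpa using hneg.isUnit.neg
  have hAdet : IsUnit A.det := (isUnit_iff_isUnit_det A).mp hAunit
  have hMAM : M * (M * A⁻¹ * M)⁻¹ * M = A := mul_inv_mul_nonsing_inv_mul hAunit hMinv
  have hPi12_transpose : (Λ12 * A⁻¹ * M)ᵀ = M * A⁻¹ * Λ12ᵀ := by
    rw [transpose_mul, transpose_mul, hM, transpose_nonsing_inv, hA, transpose_add, hM, hΛ22,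
      Matrix.mul_assoc]
  simp only [sub_sub_cancel]
  refine ⟨?_, ?_, ?_, ?_⟩
  · rw [sub_sub_cancel_left]
    simpa only [conjTranspose_eq_transpose_of_trivial, hM] using posDef_neg_conjTranspose_mul_inv_mul hneg hMinv
  · rw [hPi12_transpose]
    calc Λ11 - Λ12 * A⁻¹ * Λ12ᵀ + Λ12 * A⁻¹ * M * (M * A⁻¹ * M)⁻¹ * (M * A⁻¹ * Λ12ᵀ)
        = Λ11 - Λ12 * A⁻¹ * Λ12ᵀ + Λ12 * A⁻¹ * (M * (M * A⁻¹ * M)⁻¹ * M) * A⁻¹ * Λ12ᵀ := by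
          simp only [Matrix.mul_assoc]
      _ = Λ11 := by rw [hMAM, nonsing_inv_mul_cancel_right _ _ hAdet, sub_add_cancel]
  · calc Λ12 * A⁻¹ * M * (M * A⁻¹ * M)⁻¹ * M = Λ12 * A⁻¹ * (M * (M * A⁻¹ * M)⁻¹ * M) := by
          simp only [Matrix.mul_assoc]
      _ = Λ12 := by rw [hMAM, nonsing_inv_mul_cancel_right _ _ hAdet]
  · rw [hMAM, hA, add_sub_cancel_left]

/-- The map `Π` on block matrices `Λ` with `Λ²² + M ≺ 0` produces `Q = Π(Λ)` with
`Q²² − M ≻ 0`, and the explicit inverse map `Π⁻¹` recovers `Λ` from `Π(Λ)`. -/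
theorem Pi_map_and_inverse {n : ℕ}
    (M Λ11 Λ12 Λ22 : Matrix (Fin n) (Fin n) ℝ)
    (hM : Mᵀ = M) (hMinv : IsUnit M)
    (hΛ11 : Λ11ᵀ = Λ11) (hΛ22 : Λ22ᵀ = Λ22)
    (hneg : (-(M + Λ22)).PosDef) :
    ((M - M * (M + Λ22)⁻¹ * M) - M).PosDef ∧
    (Λ11 - Λ12 * (M + Λ22)⁻¹ * Λ12ᵀ)
        + (Λ12 * (M + Λ22)⁻¹ * M) * (M - (M - M * (M + Λ22)⁻¹ * M))⁻¹ * (Λ12 * (M + Λ22)⁻¹ * M)ᵀ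
      = Λ11 ∧
    (Λ12 * (M + Λ22)⁻¹ * M) * (M - (M - M * (M + Λ22)⁻¹ * M))⁻¹ * M = Λ12 ∧
    M * (M - (M - M * (M + Λ22)⁻¹ * M))⁻¹ * M - M = Λ22 :=
  Pi_map_and_inverse_general M Λ11 Λ12 Λ22 hM hMinv hΛ22 hneg
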